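/- Let P ∈ ℝ^{n×n} be symmetric positive definite, H ∈ ℝ^{m×n}, R ∈ ℝ^{m×m} symmetric positive definite, m̄ ∈ ℝ, K = m̄·P Hᵀ (m̄²·H P Hᵀ + R)⁻¹, and P⁺ = P − m̄·K H P. Then P⁺ ⪯ P in the Loewner order. -/

import Mathlib

open Matrix

lemma posSemidef_smul_aux {k : ℕ} {A : Matrix (Fin k) (Fin k) ℝ}
    (hA : A.PosSemidef) {c : ℝ} (hc : 0 ≤ c) : (c • A).PosSemidef := by
  refine ⟨?_, fun x => ?_⟩
  · unfold Matrix.IsHermitian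
    rw [conjTranspose_smul, hA.1.eq]
    simp
  · exact (hA.smul hc).2 x

theorem stmt_14 (n m : ℕ)
    (P : Matrix (Fin n) (Fin n) ℝ) (hP : P.PosDef)
    (H : Matrix (Fin m) (Fin n) ℝ)
    (R : Matrix (Fin m) (Fin m) ℝ) (hR : R.PosDef)
    (mbar : ℝ)
    (K : Matrix (Fin n) (Fin m) ℝ)
    (hK : K = mbar • (P * Hᵀ * (mbar ^ 2 • (H * P * Hᵀ) + R)⁻¹))
    (Pplus : Matrix (Fin n) (Fin n) ℝ)
    (hPplus : Pplus = P - mbar • (K * H * P)) :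
    (P - Pplus).PosSemidef := by
  have hHPHt : (H * P * Hᵀ).PosSemidef := by
    have := hP.posSemidef.mul_mul_conjTranspose_same H
    simpa using this
  have h1 : (mbar ^ 2 • (H * P * Hᵀ)).PosSemidef :=
    posSemidef_smul_aux hHPHt (sq_nonneg mbar)
  have hS : (mbar ^ 2 • (H * P * Hᵀ) + R).PosDef := Matrix.PosDef.posSemidef_add h1 hR
  have hSinv : (mbar ^ 2 • (H * P * Hᵀ) + R)⁻¹.PosSemidef := hS.inv.posSemidef
  have hPt : Pᵀ = P := hP.isHermitian
  have hPHt : P * Hᵀ = (H * P)ᴴ := by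
    rw [conjTranspose_mul]
    simp [hPt]
  have key : P - Pplus = mbar ^ 2 • ((H * P)ᴴ * (mbar ^ 2 • (H * P * Hᵀ) + R)⁻¹ * (H * P)) := by
    subst hPplus hK
    rw [sub_sub_cancel, ← hPHt]
    rw [Matrix.smul_mul, Matrix.smul_mul, smul_smul, ← sq, Matrix.mul_assoc]
  rw [key]
  exact posSemidef_smul_aux (hSinv.conjTranspose_mul_mul_same (H * P)) (sq_nonneg mbar)
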